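/- arXiv:math/0609733 — 7 statements merged into one kernel-verified Lean document; each statement's English description precedes it below -/
import Mathlib

section
/- Let L be a perfect field containing F_q, let V be a finite-dimensional L-vector space, and let τ : V → V be an additive map that is Frobenius-semilinear, i.e. τ(a·v) = a^q·τ(v) for all a ∈ L, v ∈ V. Then V decomposes as a direct sum V = V_ét ⊕ V_nil of τ-stable subspaces, where τ restricted to V_ét = ⋂_{n≥1} image(τ^n) is bijective and τ restricted to V_nil is nilpotent. -/
/-!
Fitting's lemma for the semilinear map `τ`. Since `L` is perfect, the twist `a ↦ a ^ p ^ e` is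
surjective, so the images of the iterates `τ^[n]` are `L`-subspaces, and so are their kernels. In
finite dimension both chains become stationary from some `N ≥ 1` on. Then `im τ^[N] ∩ ker τ^[N] = 0`
because `ker τ^[2N] = ker τ^[N]`, and `v - τ^[N] w ∈ ker τ^[N]` for `w` with
`τ^[2N] w = τ^[N] v`; moreover `τ` maps `im τ^[N]` onto `im τ^[N+1] = im τ^[N]`, injectively
because `ker τ ⊆ ker τ^[N]`.
-/

open Function Set

namespace LinearMap

variable {R V : Type*} [Ring R] [AddCommGroup V] [Module R V] {σ : R →+* R} (T : V →ₛₗ[σ] V)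

theorem iterate_map_smulₛₗ (n : ℕ) (a : R) (v : V) : T^[n] (a • v) = σ^[n] a • T^[n] v := by
  induction n generalizing a v with
  | zero => rfl
  | succ n ih => rw [iterate_succ_apply', ih, map_smulₛₗ, ← iterate_succ_apply' σ,
      ← iterate_succ_apply' T]

def kerIterate (n : ℕ) : Submodule R V where
  carrier := {v | T^[n] v = 0}
  add_mem' {v w} hv hw := by simp_all [iterate_map_add]
  zero_mem' := iterate_map_zero T n
  smul_mem' a v hv := by simp_all [iterate_map_smulₛₗ]

def rangeIterate [RingHomSurjective σ] (n : ℕ) : Submodule R V where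
  carrier := Set.range T^[n]
  add_mem' := by
    rintro - - ⟨v, rfl⟩ ⟨w, rfl⟩
    exact ⟨v + w, iterate_map_add T n v w⟩
  zero_mem' := ⟨0, iterate_map_zero T n⟩
  smul_mem' := by
    rintro a - ⟨v, rfl⟩
    obtain ⟨b, rfl⟩ := (σ.surjective.iterate n) a
    exact ⟨b • v, iterate_map_smulₛₗ T n b v⟩

variable {T}

@[simp]
theorem mem_kerIterate {n : ℕ} {v : V} : v ∈ T.kerIterate n ↔ T^[n] v = 0 := Iff.rfl

theorem kerIterate_mono : Monotone T.kerIterate :=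
  monotone_nat_of_le_succ fun n v (hv : T^[n] v = 0) ↦
    show T^[n + 1] v = 0 by rw [iterate_succ_apply', hv, map_zero]

theorem mapsTo_kerIterate (n : ℕ) : MapsTo T (T.kerIterate n) (T.kerIterate n) :=
  fun v (hv : T^[n] v = 0) ↦ show T^[n] (T v) = 0 by
    rw [← iterate_succ_apply, iterate_succ_apply', hv, map_zero]

section Surjective

variable [RingHomSurjective σ]

theorem rangeIterate_anti : Antitone T.rangeIterate :=
  antitone_nat_of_succ_le fun n ↦ by
    rintro - ⟨v, rfl⟩
    exact ⟨T v, iterate_succ_apply T n v⟩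

theorem mapsTo_rangeIterate (n : ℕ) : MapsTo T (T.rangeIterate n) (T.rangeIterate n) := by
  rintro - ⟨v, rfl⟩
  exact rangeIterate_anti n.le_succ ⟨v, iterate_succ_apply' T n v⟩

theorem exists_kerIterate_rangeIterate_stable [IsNoetherian R V] [IsArtinian R V] :
    ∃ N, 1 ≤ N ∧ ∀ m ≥ N, T.kerIterate m = T.kerIterate N ∧ T.rangeIterate m = T.rangeIterate N := by
  obtain ⟨N₁, h₁⟩ := monotone_stabilizes_iff_noetherian.mpr ‹_› ⟨T.kerIterate, kerIterate_mono⟩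
  obtain ⟨N₂, h₂⟩ := IsArtinian.monotone_stabilizes ⟨T.rangeIterate, rangeIterate_anti⟩
  have h₁ : ∀ m ≥ N₁, T.kerIterate m = T.kerIterate N₁ := fun m hm ↦ (h₁ m hm).symm
  have h₂ : ∀ m ≥ N₂, T.rangeIterate m = T.rangeIterate N₂ := fun m hm ↦ (h₂ m hm).symm
  refine ⟨max (max N₁ N₂) 1, le_max_right _ _, fun m hm ↦ ⟨?_, ?_⟩⟩
  · exact (h₁ m (by omega)).trans (h₁ _ (by omega)).symm
  · exact (h₂ m (by omega)).trans (h₂ _ (by omega)).symm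

variable {N : ℕ}

theorem disjoint_rangeIterate_kerIterate (hK : ∀ m ≥ N, T.kerIterate m = T.kerIterate N) :
    Disjoint (T.rangeIterate N) (T.kerIterate N) := by
  rw [Submodule.disjoint_def]
  rintro - ⟨v, rfl⟩ (h : T^[N] (T^[N] v) = 0)
  have : v ∈ T.kerIterate (N + N) := by rwa [mem_kerIterate, iterate_add_apply]
  rwa [hK _ (N.le_add_right N)] at this

theorem codisjoint_rangeIterate_kerIterate (hW : ∀ m ≥ N, T.rangeIterate m = T.rangeIterate N) :
    Codisjoint (T.rangeIterate N) (T.kerIterate N) := by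
  rw [codisjoint_iff, eq_top_iff]
  intro v _
  obtain ⟨w, hw⟩ : T^[N] v ∈ T.rangeIterate (N + N) := by
    rw [hW _ (N.le_add_right N)]
    exact ⟨v, rfl⟩
  have hk : v - T^[N] w ∈ T.kerIterate N := by
    rw [mem_kerIterate, iterate_map_sub, ← iterate_add_apply, hw, sub_self]
  exact Submodule.mem_sup.2 ⟨_, ⟨w, rfl⟩, _, hk, add_sub_cancel _ _⟩

theorem isCompl_rangeIterate_kerIterate (hK : ∀ m ≥ N, T.kerIterate m = T.kerIterate N)
    (hW : ∀ m ≥ N, T.rangeIterate m = T.rangeIterate N) :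
    IsCompl (T.rangeIterate N) (T.kerIterate N) :=
  ⟨disjoint_rangeIterate_kerIterate hK, codisjoint_rangeIterate_kerIterate hW⟩

theorem bijOn_rangeIterate (hN : 1 ≤ N) (hK : ∀ m ≥ N, T.kerIterate m = T.kerIterate N)
    (hW : ∀ m ≥ N, T.rangeIterate m = T.rangeIterate N) :
    BijOn T (T.rangeIterate N) (T.rangeIterate N) := by
  refine ⟨mapsTo_rangeIterate N, fun v hv w hw hvw ↦ ?_, fun v hv ↦ ?_⟩
  · have hker : v - w ∈ T.kerIterate N :=
      kerIterate_mono hN (by simp [map_sub, hvw])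
    exact sub_eq_zero.1 <| (Submodule.disjoint_def.1 (disjoint_rangeIterate_kerIterate hK))
      _ (Submodule.sub_mem _ hv hw) hker
  · rw [← hW (N + 1) N.le_succ] at hv
    obtain ⟨u, rfl⟩ := hv
    exact ⟨T^[N] u, ⟨u, rfl⟩, (iterate_succ_apply' T N u).symm⟩

theorem coe_rangeIterate_eq_iInter (hN : 1 ≤ N)
    (hW : ∀ m ≥ N, T.rangeIterate m = T.rangeIterate N) :
    (T.rangeIterate N : Set V) = ⋂ n ≥ 1, Set.range T^[n] := by
  ext v
  simp only [Set.mem_iInter]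
  refine ⟨fun hv n _ ↦ ?_, fun hv ↦ hv N hN⟩
  rcases le_total n N with h | h
  · exact rangeIterate_anti h hv
  · rwa [← hW n h] at hv

end Surjective

end LinearMap

theorem stmt0_general (p : ℕ) [Fact p.Prime] (e : ℕ)
    (L : Type*) [Field L] [CharP L p] [PerfectRing L p]
    (V : Type*) [AddCommGroup V] [Module L V] [FiniteDimensional L V]
    (τ : V → V) (hadd : ∀ v w : V, τ (v + w) = τ v + τ w)
    (hsem : ∀ (a : L) (v : V), τ (a • v) = a ^ p ^ e • τ v) :
    ∃ Vet Vnil : Submodule L V,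
      IsCompl Vet Vnil ∧
      (∀ v ∈ Vet, τ v ∈ Vet) ∧ (∀ v ∈ Vnil, τ v ∈ Vnil) ∧
      (Vet : Set V) = ⋂ n ≥ 1, Set.range (τ^[n]) ∧
      Set.BijOn τ Vet Vet ∧
      ∃ n : ℕ, 1 ≤ n ∧ ∀ v ∈ Vnil, τ^[n] v = 0 := by
  have : RingHomSurjective (iterateFrobenius L p e) :=
    ⟨(bijective_iterateFrobenius L p e).surjective⟩
  let T : V →ₛₗ[iterateFrobenius L p e] V :=
    { toFun := τ, map_add' := hadd, map_smul' := fun a v ↦ by simp [hsem, iterateFrobenius_def] }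
  obtain ⟨N, hN, hstab⟩ := T.exists_kerIterate_rangeIterate_stable
  have hK : ∀ m ≥ N, T.kerIterate m = T.kerIterate N := fun m hm ↦ (hstab m hm).1
  have hW : ∀ m ≥ N, T.rangeIterate m = T.rangeIterate N := fun m hm ↦ (hstab m hm).2
  exact ⟨T.rangeIterate N, T.kerIterate N, LinearMap.isCompl_rangeIterate_kerIterate hK hW,
    LinearMap.mapsTo_rangeIterate N, LinearMap.mapsTo_kerIterate N,
    LinearMap.coe_rangeIterate_eq_iInter hN hW, LinearMap.bijOn_rangeIterate hN hK hW,
    N, hN, fun _ hv ↦ hv⟩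

/-- Over a perfect field `L ⊇ 𝔽_q`, a Frobenius-semilinear endomorphism `τ` of a
finite-dimensional `L`-vector space decomposes `V = V_ét ⊕ V_nil` with
`V_ét = ⋂_{n ≥ 1} im(τ^n)`, `τ` bijective on `V_ét` and nilpotent on `V_nil`. -/
theorem stmt0 (p : ℕ) [Fact p.Prime] (e : ℕ) (he : 0 < e)
    (L : Type*) [Field L] [CharP L p] [PerfectRing L p]
    (V : Type*) [AddCommGroup V] [Module L V] [FiniteDimensional L V]
    (τ : V → V) (hadd : ∀ v w : V, τ (v + w) = τ v + τ w)
    (hsem : ∀ (a : L) (v : V), τ (a • v) = a ^ p ^ e • τ v) :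
    ∃ Vet Vnil : Submodule L V,
      IsCompl Vet Vnil ∧
      (∀ v ∈ Vet, τ v ∈ Vet) ∧ (∀ v ∈ Vnil, τ v ∈ Vnil) ∧
      (Vet : Set V) = ⋂ n ≥ 1, Set.range (τ^[n]) ∧
      Set.BijOn τ Vet Vet ∧
      ∃ n : ℕ, 1 ≤ n ∧ ∀ v ∈ Vnil, τ^[n] v = 0 :=
  stmt0_general p e L V τ hadd hsem
end

section
/- Let K be a field and let H ⊆ M_n(K) be a commutative semisimple K-subalgebra with dim_K H = n. Then H, viewed as a left module over itself via its embedding in M_n(K), makes K^n into an H-module isomorphic to H; in particular K^n is a free H-module of rank 1. -/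
/-!
Pick `v ∈ K^n` whose annihilator in `H` is minimal (`H` is Artinian). Were it nonzero, it would
be generated by a nonzero idempotent `e`; as `K^n` is a faithful `H`-module, `e • w ≠ 0` for
some `w`, and by commutativity the annihilator of `v + e • w` is strictly smaller. So the orbit
map `h ↦ h • v` is an injective `K`-linear map `H → K^n` between spaces of the same dimension.
-/

open Ideal

theorem torsionOf_add_smul_lt {R M : Type*} [CommSemiring R] [AddCommMonoid M] [Module R M]
    {v w : M} {e : R} (he : IsIdempotentElem e)
    (hev : e • v = 0) (hew : e • w ≠ 0) : torsionOf R M (v + e • w) < torsionOf R M v := by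
  refine lt_of_le_of_ne (fun a ha ↦ ?_) fun h ↦ ?_
  · rw [mem_torsionOf_iff, smul_add] at ha
    rw [mem_torsionOf_iff]
    have haew : a • e • w = 0 := by
      simpa only [smul_add, smul_comm e a, hev, smul_zero, zero_add, ← mul_smul e e, he.eq]
        using congrArg (e • ·) ha
    rwa [haew, add_zero] at ha
  · have he_mem : e ∈ torsionOf R M (v + e • w) := h ▸ (mem_torsionOf_iff v e).mpr hev
    rw [mem_torsionOf_iff, smul_add, hev, zero_add, ← mul_smul, he.eq] at he_mem
    exact hew he_mem

theorem exists_torsionOf_eq_bot_of_isSemisimpleRing {R M : Type*} [CommRing R]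
    [IsSemisimpleRing R] [AddCommMonoid M] [Module R M] [FaithfulSMul R M] :
    ∃ v : M, torsionOf R M v = ⊥ := by
  obtain ⟨_, ⟨v, rfl⟩, hmin⟩ :=
    (wellFounded_lt (α := Ideal R)).has_min (Set.range (torsionOf R M)) ⟨_, 0, rfl⟩
  refine ⟨v, by_contra fun hne ↦ ?_⟩
  obtain ⟨e, he, hspan⟩ := IsSemisimpleRing.ideal_eq_span_idempotent (torsionOf R M v)
  have hev : e • v = 0 := (mem_torsionOf_iff v e).mp (hspan ▸ mem_span_singleton_self e)
  obtain ⟨w, hew⟩ : ∃ w : M, e • w ≠ 0 := by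
    by_contra! h
    have he0 : e = 0 := FaithfulSMul.eq_of_smul_eq_smul fun w ↦ by rw [h w, zero_smul]
    exact hne (by rw [hspan, he0, span_singleton_eq_bot])
  exact hmin _ ⟨v + e • w, rfl⟩ (torsionOf_add_smul_lt he hev hew)

/-- A commutative semisimple subalgebra `H ⊆ M_n(K)` with `dim_K H = n` makes `K^n`
a free `H`-module of rank one: some vector `v` is a cyclic generator whose orbit
map `H → K^n`, `h ↦ h·v`, is bijective. -/
theorem stmt4 (K : Type*) [Field K] (n : ℕ)
    (H : Subalgebra K (Matrix (Fin n) (Fin n) K))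
    (hcomm : ∀ a b : H, a * b = b * a)
    (hss : IsSemisimpleRing H)
    (hdim : Module.finrank K H = n) :
    ∃ v : Fin n → K,
      Function.Bijective (fun h : H => (h : Matrix (Fin n) (Fin n) K).mulVec v) := by
  let : CommRing H := { (inferInstance : Ring H) with mul_comm := hcomm }
  have : FaithfulSMul H (Fin n → K) :=
    ⟨fun h ↦ Subtype.ext (Matrix.ext_iff_smul.mpr h)⟩
  obtain ⟨v, hv⟩ := exists_torsionOf_eq_bot_of_isSemisimpleRing (R := H) (M := Fin n → K)
  let orbit : H →ₗ[K] Fin n → K := (LinearMap.toSpanSingleton H _ v).restrictScalars K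
  have hinj : Function.Injective orbit :=
    (LinearMap.ker_eq_bot (f := LinearMap.toSpanSingleton H _ v)).mp hv
  have hfinrank : Module.finrank K H = Module.finrank K (Fin n → K) := by simp [hdim]
  exact ⟨v, hinj, (LinearMap.injective_iff_surjective_of_finrank_eq_finrank hfinrank).mp hinj⟩
end

section
/- Let K be a field of characteristic p > 0, let V be a finite-dimensional K-vector space, and let π ∈ End_K(V). If p^m ≥ dim_K V, then π^{p^m} is absolutely semisimple, i.e. for every field extension K'/K the endomorphism π^{p^m} ⊗ 1 of V ⊗_K K' has squarefree minimal polynomial. -/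
/-!
Over any extension `K'`, the minimal polynomial `μ` of `π` has degree at most `dim V ≤ p ^ m`.
Write an irreducible factor of `μ` as `h = g(X ^ p ^ e)` with `g` separable; its multiplicity is
at most `p ^ (m - e)`, and `h ^ p ^ (m - e) = g'(X ^ p ^ m)` where `g'` is `g` with coefficients
raised to the `p ^ (m - e)`-th power, still separable. Multiplying over the distinct factors gives
a separable `s` with `μ ∣ s(X ^ p ^ m)`, so `s` kills `π ^ p ^ m` and the minimal polynomial of
`π ^ p ^ m` divides a separable polynomial.
-/

open Polynomial

namespace Polynomial

variable {L : Type*} [Field L] (p : ℕ) [ExpChar L p] {m : ℕ}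

theorem exists_separable_pow_dvd_expand_of_irreducible {h : L[X]} (hh : Irreducible h) {i : ℕ}
    (hi : 0 < i) (hd : i * h.natDegree ≤ p ^ m) :
    ∃ s : L[X], s.Separable ∧ h ^ i ∣ expand L (p ^ m) s ∧
      expand L (p ^ m) s ∣ (h ^ i) ^ p ^ m := by
  obtain ⟨g, hg, e, rfl⟩ := hh.hasSeparableContraction p
  have hpe : 0 < p ^ e := expChar_pow_pos L p e
  have hg0 : 0 < g.natDegree := by
    have := hh.natDegree_pos
    rw [natDegree_expand] at this
    exact Nat.pos_of_mul_pos_right this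
  have hie : i * p ^ e ≤ p ^ m :=
    calc i * p ^ e ≤ i * (g.natDegree * p ^ e) := by gcongr; exact Nat.le_mul_of_pos_left _ hg0
      _ ≤ p ^ m := by rwa [← natDegree_expand]
  have hm : p ^ m = p ^ (m - e) * p ^ e := by
    rcases expChar_is_prime_or_one L p with hp | rfl
    · have : e ≤ m := (Nat.pow_le_pow_iff_right hp.one_lt).mp (le_of_mul_le_of_one_le_right hie hi)
      rw [← pow_add, Nat.sub_add_cancel this]
    · simp
  have hexp : expand L (p ^ m) (g.map (iterateFrobenius L p (m - e))) =
      expand L (p ^ e) g ^ p ^ (m - e) := by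
    rw [← map_expand, hm, ← expand_expand, map_iterateFrobenius_expand]
  refine ⟨g.map (iterateFrobenius L p (m - e)), hg.map, ?_, ?_⟩ <;> rw [hexp]
  · rw [hm] at hie
    exact pow_dvd_pow _ (Nat.le_of_mul_le_mul_right hie hpe)
  · rw [← pow_mul]
    exact pow_dvd_pow _ ((Nat.pow_le_pow_right (expChar_pos L p) (Nat.sub_le m e)).trans
      (Nat.le_mul_of_pos_left _ hi))

theorem exists_separable_dvd_expand_of_natDegree_le {μ : L[X]} (hμ : μ ≠ 0)
    (hd : μ.natDegree ≤ p ^ m) :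
    ∃ s : L[X], s.Separable ∧ μ ∣ expand L (p ^ m) s ∧ expand L (p ^ m) s ∣ μ ^ p ^ m := by
  induction μ using UniqueFactorizationMonoid.induction_on_coprime with
  | h0 => exact absurd rfl hμ
  | h1 hu => exact ⟨1, separable_one, by simpa using hu.dvd, by simp⟩
  | @hpr h i hh =>
    rcases Nat.eq_zero_or_pos i with rfl | hi
    · exact ⟨1, separable_one, by simp, by simp⟩
    · exact exists_separable_pow_dvd_expand_of_irreducible p hh.irreducible hi
        (natDegree_pow h i ▸ hd)
  | @hcp x y hxy hx hy =>
    obtain ⟨hx0, hy0⟩ := mul_ne_zero_iff.mp hμ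
    obtain ⟨sx, hsx, hxs, hsx'⟩ := hx hx0 ((natDegree_le_of_dvd (dvd_mul_right x y) hμ).trans hd)
    obtain ⟨sy, hsy, hys, hsy'⟩ := hy hy0 ((natDegree_le_of_dvd (dvd_mul_left y x) hμ).trans hd)
    have : IsLocalHom (expand L (p ^ m)) := isLocalHom_expand L (expChar_pow_pos L p m)
    -- The last conjunct is what makes `sx`, `sy` coprime: their expansions divide powers of `x`, `y`.
    have hcop : IsCoprime sx sy := isRelPrime_iff_isCoprime.mp <|
      IsRelPrime.of_map (expand L (p ^ m))
        ((hxy.pow_left.pow_right.of_dvd_left hsx').of_dvd_right hsy')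
    refine ⟨sx * sy, hsx.mul hsy hcop, ?_, ?_⟩ <;> rw [map_mul]
    · exact mul_dvd_mul hxs hys
    · rw [mul_pow]
      exact mul_dvd_mul hsx' hsy'

end Polynomial

theorem Module.End.separable_minpoly_pow_of_finrank_le {L W : Type*} [Field L] [AddCommGroup W]
    [Module L W] [FiniteDimensional L W] (p : ℕ) [ExpChar L p] (f : Module.End L W) {m : ℕ}
    (h : Module.finrank L W ≤ p ^ m) : (minpoly L (f ^ p ^ m)).Separable := by
  have hdeg : (minpoly L f).natDegree ≤ p ^ m :=
    calc (minpoly L f).natDegree ≤ f.charpoly.natDegree :=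
          natDegree_le_of_dvd f.minpoly_dvd_charpoly f.charpoly_monic.ne_zero
      _ ≤ p ^ m := f.charpoly_natDegree ▸ h
  obtain ⟨s, hs, hdvd, -⟩ :=
    exists_separable_dvd_expand_of_natDegree_le p (minpoly.ne_zero_of_finite L f) hdeg
  refine hs.of_dvd (minpoly.dvd L _ ?_)
  obtain ⟨c, hc⟩ := hdvd
  rw [← expand_aeval, hc, map_mul, minpoly.aeval, zero_mul]

/-- In characteristic `p`, if `p^m ≥ dim_K V` then `π^{p^m}` is absolutely
semisimple: after any base field extension its minimal polynomial is squarefree. -/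
theorem stmt11 {K V : Type*} [Field K] [AddCommGroup V] [Module K V]
    [FiniteDimensional K V] (p : ℕ) [Fact p.Prime] [CharP K p]
    (π : Module.End K V) (m : ℕ) (h : Module.finrank K V ≤ p ^ m) :
    ∀ (K' : Type*) [Field K'] [Algebra K K'],
      Squarefree (minpoly K' (LinearMap.baseChange K' ((π ^ p ^ m : Module.End K V) : V →ₗ[K] V))) := by
  intro K' _ _
  have : ExpChar K p := ExpChar.prime Fact.out
  have : ExpChar K' p := expChar_of_injective_algebraMap (algebraMap K K').injective p
  rw [LinearMap.baseChange_pow]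
  exact (Module.End.separable_minpoly_pow_of_finrank_le p _
    (by rwa [Module.finrank_baseChange])).squarefree
end

section
/- Let K ⊆ L be a field extension and let f, g ∈ K[x] be nonzero polynomials. Define r_K(f,g) = Σ_μ m(μ)·n(μ)·deg μ, where the sum runs over monic irreducible μ ∈ K[x] and m(μ), n(μ) are the multiplicities of μ in f and g respectively; define r_L(f,g) analogously using the factorizations in L[x]. Then r_K(f,g) ≤ r_L(f,g), with equality if every irreducible common factor of f and g in K[x] is separable, and in particular whenever L is a separable extension of K. -/
/-!
Every monic irreducible factor `ν` of `f` over `L` divides the image of exactly one monic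
irreducible factor `μ` of `f` over `K`, because distinct such `μ` stay coprime over `L`. If `ν`
occurs with multiplicity `e(ν)` in `μ`, then it occurs with multiplicity `m(μ) e(ν)` in `f` and
`n(μ) e(ν)` in `g`, so that
`r_L(f, g) = Σ_μ m(μ) n(μ) Σ_{ν ∣ μ} e(ν)² deg ν ≥ Σ_μ m(μ) n(μ) Σ_{ν ∣ μ} e(ν) deg ν = r_K(f, g)`,
with equality as soon as the common factors `μ` stay squarefree over `L`. Separable
polynomials do; over a separable extension so does every irreducible polynomial.
-/
open Polynomial UniqueFactorizationMonoid

/-- `rinv K f g = Σ_μ m(μ)·n(μ)·deg μ`, summed over the monic irreducible factors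
`μ` of `f` and `g` with multiplicities `m(μ)`, `n(μ)`. -/
noncomputable def rinv (K : Type*) [Field K] (f g : K[X]) : ℕ :=
  letI : DecidableEq K := Classical.decEq K
  letI : DecidableEq K[X] := Classical.decEq _
  ∑ μ ∈ (normalizedFactors f).toFinset ∪ (normalizedFactors g).toFinset,
    (normalizedFactors f).count μ * (normalizedFactors g).count μ * μ.natDegree

namespace Polynomial

variable {K L : Type*} [Field K] [Field L]

theorem monic_of_mem_normalizedFactors [DecidableEq K] {p μ : K[X]}
    (h : μ ∈ normalizedFactors p) : μ.Monic :=
  normalize_normalized_factor μ h ▸ monic_normalize (irreducible_of_normalized_factor μ h).ne_zero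

theorem natDegree_eq_sum_normalizedFactors [DecidableEq K] {p : K[X]} (hp : p ≠ 0) :
    p.natDegree = ((normalizedFactors p).map natDegree).sum := by
  rw [← natDegree_multiset_prod_of_monic _ fun q => monic_of_mem_normalizedFactors,
    prod_normalizedFactors_eq hp, natDegree_eq_of_degree_eq degree_normalize]

theorem normalizedFactors_map [DecidableEq K] [DecidableEq L] (φ : K →+* L) (f : K[X]) :
    normalizedFactors (f.map φ) =
      (normalizedFactors f).bind fun μ => normalizedFactors (μ.map φ) := by
  rcases eq_or_ne f 0 with rfl | hf
  · simp
  have hassoc : Associated (((normalizedFactors f).map (map φ)).prod) (f.map φ) := by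
    simpa [Polynomial.map_multiset_prod] using (prod_normalizedFactors hf).map (mapRingHom φ)
  rw [← hassoc.normalizedFactors_eq, normalizedFactors_multiset_prod, Multiset.map_map]
  · rfl
  · simpa using zero_notMem_normalizedFactors f

theorem disjoint_normalizedFactors_map [DecidableEq L] (φ : K →+* L) {μ₁ μ₂ : K[X]}
    (h : IsCoprime μ₁ μ₂) :
    Disjoint (normalizedFactors (μ₁.map φ)) (normalizedFactors (μ₂.map φ)) := by
  rw [Multiset.disjoint_left]
  intro ν h₁ h₂
  exact (irreducible_of_normalized_factor ν h₁).not_isUnit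
    (((isCoprime_map φ).2 h).isUnit_of_dvd' (dvd_of_mem_normalizedFactors h₁)
      (dvd_of_mem_normalizedFactors h₂))

theorem isCoprime_of_mem_normalizedFactors [DecidableEq K] {f μ₁ μ₂ : K[X]}
    (h₁ : μ₁ ∈ normalizedFactors f) (hμ₂ : Irreducible μ₂) (hμ₂m : μ₂.Monic) (hne : μ₁ ≠ μ₂) :
    IsCoprime μ₁ μ₂ := by
  have hμ₁ := irreducible_of_normalized_factor μ₁ h₁
  refine hμ₁.coprime_iff_not_dvd.2 fun hdvd => hne ?_
  exact eq_of_monic_of_associated (monic_of_mem_normalizedFactors h₁) hμ₂m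
    (hμ₁.associated_of_dvd hμ₂ hdvd)

theorem count_normalizedFactors_map [DecidableEq K] [DecidableEq L] [DecidableEq K[X]]
    [DecidableEq L[X]] (φ : K →+* L) (g : K[X]) {μ : K[X]} (hμ : Irreducible μ) (hμm : μ.Monic)
    {ν : L[X]} (hν : ν ∈ normalizedFactors (μ.map φ)) :
    (normalizedFactors (g.map φ)).count ν =
      (normalizedFactors g).count μ * (normalizedFactors (μ.map φ)).count ν := by
  rw [normalizedFactors_map, Multiset.count_bind, Multiset.sum_map_eq_nsmul_single μ, smul_eq_mul]
  intro μ' hne hμ'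
  refine Multiset.count_eq_zero.2 fun hν' => Multiset.disjoint_left.1
    (disjoint_normalizedFactors_map φ (isCoprime_of_mem_normalizedFactors hμ' hμ hμm hne)) hν' hν

theorem dvd_of_expand_dvd_expand {N : ℕ} (hN : 0 < N) {a b : K[X]}
    (h : expand K N a ∣ expand K N b) : a ∣ b := by
  rcases eq_or_ne a 0 with rfl | ha
  · rw [map_zero, zero_dvd_iff, expand_eq_zero hN] at h
    simp [h]
  rw [← EuclideanDomain.mod_eq_zero]
  by_contra hr
  have hdvd : expand K N a ∣ expand K N (b % a) := by
    rw [← EuclideanDomain.div_add_mod b a, map_add, map_mul] at h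
    exact (dvd_add_right (dvd_mul_right _ _)).1 h
  have hdeg := natDegree_le_of_dvd hdvd (by rwa [Ne, expand_eq_zero hN])
  rw [natDegree_expand, natDegree_expand] at hdeg
  have hlt := natDegree_lt_natDegree hr (degree_mod_lt b ha)
  have := Nat.mul_lt_mul_of_pos_right hlt hN
  omega

theorem squarefree_map_of_irreducible [Algebra K L] [Algebra.IsSeparable K L] {μ : K[X]}
    (hμ : Irreducible μ) : Squarefree (μ.map (algebraMap K L)) := by
  refine (squarefree_iff_irreducible_sq_not_dvd_of_ne_zero (map_ne_zero hμ.ne_zero)).2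
    fun ν hν hνν => ?_
  -- Write `ν = g(X^(q^m))` with `g` separable and take a root `α` of `ν`. Then `α^(q^m)` is
  -- separable over `L`, hence over `K`, and `μ = minpoly K α` divides `h(X^(q^m))` for the
  -- separable `h = minpoly K (α^(q^m))`; so `ν * ν ∣ μ` forces `g * g ∣ h` over `L`.
  have := Fact.mk hν
  obtain ⟨q, _⟩ := ExpChar.exists K
  have : ExpChar L q := expChar_of_injective_algebraMap (algebraMap K L).injective q
  obtain ⟨g, hg, m, rfl⟩ := hν.hasSeparableContraction q
  set α := AdjoinRoot.root (expand L (q ^ m) g)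
  have hαν : aeval α (expand L (q ^ m) g) = 0 := by rw [AdjoinRoot.aeval_eq, AdjoinRoot.mk_self]
  have hαμ : aeval α μ = 0 := by
    rw [← aeval_map_algebraMap L]
    exact aeval_eq_zero_of_dvd_aeval_eq_zero ((dvd_mul_right _ _).trans hνν) hαν
  set h := minpoly K (α ^ q ^ m)
  have hh : h.Separable := by
    have : IsSeparable L (α ^ q ^ m) := hg.of_dvd (minpoly.dvd L _ (by rwa [← expand_aeval]))
    exact this.of_algebra_isSeparable_of_isSeparable K
  have hμh : μ ∣ expand K (q ^ m) h := by
    refine (dvd_mul_right μ (C μ.leadingCoeff⁻¹)).trans ?_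
    rw [minpoly.eq_of_irreducible hμ hαμ]
    exact minpoly.dvd K α (by rw [expand_aeval]; exact minpoly.aeval K _)
  have hgg : g * g ∣ h.map (algebraMap K L) := by
    refine dvd_of_expand_dvd_expand (pow_pos (expChar_pos L q) m) ?_
    rw [map_mul, ← map_expand]
    exact hνν.trans (map_dvd _ hμh)
  exact hν.not_isUnit ((hh.map.squarefree g hgg).map (expand L (q ^ m)))

end Polynomial

open Polynomial

section

variable {K L : Type*} [Field K] [Field L]

theorem rinv_eq_sum_count [DecidableEq K] [DecidableEq K[X]] (f g : K[X]) :
    rinv K f g =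
      ((normalizedFactors f).map fun μ => (normalizedFactors g).count μ * μ.natDegree).sum := by
  -- `rinv` is defined with classical decidability instances; `convert` swaps them for ours.
  have : rinv K f g = ∑ μ ∈ (normalizedFactors f).toFinset ∪ (normalizedFactors g).toFinset,
      (normalizedFactors f).count μ * (normalizedFactors g).count μ * μ.natDegree := by
    unfold rinv; convert rfl
  rw [this, Finset.sum_multiset_map_count]
  simp_rw [smul_eq_mul, ← mul_assoc]
  symm
  refine Finset.sum_subset Finset.subset_union_left fun μ _ hμ => ?_
  rw [Multiset.count_eq_zero_of_notMem (Multiset.mem_toFinset.not.1 hμ), zero_mul, zero_mul]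

theorem rinv_eq_sum_natDegree_normalizedFactors_map [DecidableEq K] [DecidableEq L]
    [DecidableEq K[X]] (φ : K →+* L) (f g : K[X]) :
    rinv K f g = ((normalizedFactors f).map fun μ =>
      (normalizedFactors g).count μ * ((normalizedFactors (μ.map φ)).map natDegree).sum).sum := by
  rw [rinv_eq_sum_count]
  refine congrArg Multiset.sum (Multiset.map_congr rfl fun μ hμ => ?_)
  rw [← natDegree_eq_sum_normalizedFactors
    (map_ne_zero (irreducible_of_normalized_factor μ hμ).ne_zero), natDegree_map]

theorem rinv_map_eq_sum_count_normalizedFactors_map [DecidableEq K] [DecidableEq L]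
    [DecidableEq K[X]] [DecidableEq L[X]] (φ : K →+* L) (f g : K[X]) :
    rinv L (f.map φ) (g.map φ) = ((normalizedFactors f).map fun μ =>
      (normalizedFactors g).count μ * ((normalizedFactors (μ.map φ)).map fun ν =>
        (normalizedFactors (μ.map φ)).count ν * ν.natDegree).sum).sum := by
  rw [rinv_eq_sum_count, normalizedFactors_map φ f, Multiset.map_bind, Multiset.sum_bind]
  refine congrArg Multiset.sum (Multiset.map_congr rfl fun μ hμ => ?_)
  rw [← Multiset.sum_map_mul_left]
  refine congrArg Multiset.sum (Multiset.map_congr rfl fun ν hν => ?_)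
  rw [count_normalizedFactors_map φ g (irreducible_of_normalized_factor μ hμ)
    (monic_of_mem_normalizedFactors hμ) hν, mul_assoc]

theorem rinv_le_rinv_map (φ : K →+* L) (f g : K[X]) :
    rinv K f g ≤ rinv L (f.map φ) (g.map φ) := by
  classical
  rw [rinv_eq_sum_natDegree_normalizedFactors_map φ, rinv_map_eq_sum_count_normalizedFactors_map]
  refine Multiset.sum_map_le_sum_map _ _ fun μ _ => Nat.mul_le_mul_left _ ?_
  exact Multiset.sum_map_le_sum_map _ _ fun ν hν =>
    Nat.le_mul_of_pos_left _ (Multiset.count_pos.2 hν)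

theorem rinv_map_eq_of_squarefree (φ : K →+* L) {f g : K[X]}
    (h : ∀ μ : K[X], μ.Monic → Irreducible μ → μ ∣ f → μ ∣ g → Squarefree (μ.map φ)) :
    rinv K f g = rinv L (f.map φ) (g.map φ) := by
  classical
  rw [rinv_eq_sum_natDegree_normalizedFactors_map φ, rinv_map_eq_sum_count_normalizedFactors_map]
  refine congrArg Multiset.sum (Multiset.map_congr rfl fun μ hμ => ?_)
  rcases Nat.eq_zero_or_pos ((normalizedFactors g).count μ) with h0 | hμg
  · rw [h0, zero_mul, zero_mul]
  have hsq := h μ (monic_of_mem_normalizedFactors hμ) (irreducible_of_normalized_factor μ hμ)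
    (dvd_of_mem_normalizedFactors hμ) (dvd_of_mem_normalizedFactors (Multiset.count_pos.1 hμg))
  have hnodup := (squarefree_iff_nodup_normalizedFactors hsq.ne_zero).1 hsq
  refine congrArg _ (congrArg Multiset.sum (Multiset.map_congr rfl fun ν hν => ?_))
  rw [Multiset.count_eq_one_of_mem hnodup hν, one_mul]

end

theorem stmt13_general (K L : Type*) [Field K] [Field L] [Algebra K L]
    (f g : K[X]) :
    rinv K f g ≤ rinv L (f.map (algebraMap K L)) (g.map (algebraMap K L)) ∧
    ((∀ μ : K[X], μ.Monic → Irreducible μ → μ ∣ f → μ ∣ g → μ.Separable) →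
      rinv K f g = rinv L (f.map (algebraMap K L)) (g.map (algebraMap K L))) ∧
    (Algebra.IsSeparable K L →
      rinv K f g = rinv L (f.map (algebraMap K L)) (g.map (algebraMap K L))) :=
  ⟨rinv_le_rinv_map _ f g,
    fun hsep => rinv_map_eq_of_squarefree _ fun μ hm hi hf hg =>
      (hsep μ hm hi hf hg).map.squarefree,
    fun _ => rinv_map_eq_of_squarefree _ fun _ _ hi _ _ => squarefree_map_of_irreducible hi⟩

/-- `r_K(f,g) ≤ r_L(f,g)` for any field extension `L/K`, with equality if all
common irreducible factors of `f` and `g` are separable, and in particular if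
`L/K` is a separable extension. -/
theorem stmt13 (K L : Type*) [Field K] [Field L] [Algebra K L]
    (f g : K[X]) (hf : f ≠ 0) (hg : g ≠ 0) :
    rinv K f g ≤ rinv L (f.map (algebraMap K L)) (g.map (algebraMap K L)) ∧
    ((∀ μ : K[X], μ.Monic → Irreducible μ → μ ∣ f → μ ∣ g → μ.Separable) →
      rinv K f g = rinv L (f.map (algebraMap K L)) (g.map (algebraMap K L))) ∧
    (Algebra.IsSeparable K L →
      rinv K f g = rinv L (f.map (algebraMap K L)) (g.map (algebraMap K L))) :=
  stmt13_general K L f g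
end

section
/- Let K be a field, V a finite-dimensional K-vector space, and F ⊆ End_K(V) a commutative semisimple K-subalgebra. Let E be the commutant of F in End_K(V). Then the center of E equals F; equivalently, the bicommutant of F in End_K(V) is F itself. -/
/-!
An element `z` of the bicommutant of `F` commutes with every `F`-linear endomorphism of `V`,
so it is an endomorphism of `V` as a module over `End_F(V)`. Since `V` is a semisimple
`F`-module, the Jacobson density theorem yields `r ∈ F` agreeing with `z` on a finite set
spanning `V` over `K`, hence `z = r ∈ F`.
-/

namespace Subalgebra

variable {K V : Type*} [CommRing K] [AddCommGroup V] [Module K V]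
  (F : Subalgebra K (Module.End K V))

theorem restrictScalars_mem_centralizer (g : Module.End F V) :
    g.restrictScalars K ∈ centralizer K (F : Set (Module.End K V)) := by
  intro f hf
  ext v
  exact (g.map_smul ⟨f, hf⟩ v).symm

def bicommutantToEnd {z : Module.End K V}
    (hz : z ∈ centralizer K (centralizer K (F : Set (Module.End K V)) : Set (Module.End K V))) :
    Module.End (Module.End F V) V where
  toFun := z
  map_add' := z.map_add
  map_smul' g v := LinearMap.congr_fun (hz _ (restrictScalars_mem_centralizer F g)).symm v

theorem centralizer_centralizer_eq_self [Module.Finite K V] [IsSemisimpleRing F] :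
    centralizer K (centralizer K (F : Set (Module.End K V)) : Set (Module.End K V)) = F := by
  refine le_antisymm (fun z hz ↦ ?_) (le_centralizer_centralizer K)
  obtain ⟨s, hs⟩ := Module.Finite.fg_top (R := K) (M := V)
  obtain ⟨r, hr⟩ := jacobson_density (bicommutantToEnd F hz) s
  have hzr : z = r := LinearMap.ext_on hs hr
  exact hzr ▸ r.2

end Subalgebra

theorem stmt14_general (K V : Type*) [Field K] [AddCommGroup V] [Module K V]
    [FiniteDimensional K V]
    (F : Subalgebra K (Module.End K V))
    (hss : IsSemisimpleRing F) :
    Subalgebra.centralizer K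
        ((Subalgebra.centralizer K (F : Set (Module.End K V)) : Subalgebra K (Module.End K V)) :
          Set (Module.End K V)) = F :=
  Subalgebra.centralizer_centralizer_eq_self F

/-- The bicommutant of a commutative semisimple subalgebra `F` of `End_K(V)`
is `F` itself. -/
theorem stmt14 (K V : Type*) [Field K] [AddCommGroup V] [Module K V]
    [FiniteDimensional K V]
    (F : Subalgebra K (Module.End K V))
    (hcomm : ∀ a b : F, a * b = b * a)
    (hss : IsSemisimpleRing F) :
    Subalgebra.centralizer K
        ((Subalgebra.centralizer K (F : Set (Module.End K V)) : Subalgebra K (Module.End K V)) :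
          Set (Module.End K V)) = F :=
  stmt14_general K V F hss
end

section
/- Let L be a separably closed field containing F_q, let V be a finite-dimensional L-vector space, and let τ : V → V be a bijective additive map satisfying τ(a·v) = a^q·τ(v) for all a ∈ L, v ∈ V. Then the set of τ-invariants V^τ = {v ∈ V : τ(v) = v} is an F_q-vector space with dim_{F_q} V^τ = dim_L V, and the natural map V^τ ⊗_{F_q} L → V is an isomorphism of L-vector spaces. -/
/-!
Lang's argument. The invariants span `V`: otherwise `τ` induces a bijective semilinear map on the
nonzero quotient `V / W` by their span `W`, which has a nonzero fixed vector `ū`. Then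
`τ u - u ∈ W`, and since the Artin–Schreier equations `x ^ q - x = a` are solvable in `L`, it
equals `τ x - x` for some `x ∈ W`; so `u - x` is invariant and `ū = 0`.

A nonzero fixed vector exists in every nonzero space: on the cyclic subspace spanned by the orbit of
some `w ≠ 0`, the fixed-point equations reduce to one equation `Q(y) = y` in the last coordinate,
where `Q` has zero derivative. So `Q(Y) - Y` is separable, and as `X ^ q ∣ Q` it has a nonzero root.

A basis of invariants identifies `V^τ` with `𝔽_q ^ n`, where `𝔽_q = {x | x ^ q = x}` has `q`
elements, being the set of roots of the separable polynomial `X ^ q - X`.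
-/

open Polynomial Function Submodule Finset

namespace IsSepClosed

variable {L : Type*} [Field L] [IsSepClosed L] {q : ℕ}

theorem exists_pow_sub_self_eq (hq : (q : L) = 0) (hq2 : 2 ≤ q) (a : L) :
    ∃ x : L, x ^ q - x = a := by
  obtain ⟨x, hx⟩ :=
    exists_root_C_mul_X_pow_add_C_mul_X_add_C 1 (-1) (-a) hq hq2 (by simp)
  exact ⟨x, by linear_combination hx⟩

theorem card_rootSet_eq_natDegree {f : L[X]} (hf : f.Separable) :
    Fintype.card (f.rootSet L) = f.natDegree :=
  Polynomial.card_rootSet_eq_natDegree hf (by simpa using splits_of_separable f hf)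

theorem natCard_pow_eq_self (hq : (q : L) = 0) (hq2 : 2 ≤ q) :
    Nat.card {x : L // x ^ q = x} = q := by
  have hsep : (X ^ q - X : L[X]).Separable := by
    simpa [sub_eq_add_neg] using
      separable_C_mul_X_pow_add_C_mul_X_add_C (1 : L) (-1) 0 hq isUnit_one.neg
  have hne : (X ^ q - X : L[X]) ≠ 0 := hsep.ne_zero
  have hroots : {x : L // x ^ q = x} ≃ (X ^ q - X : L[X]).rootSet L :=
    Equiv.subtypeEquivRight fun x => by simp [mem_rootSet, hne, sub_eq_zero]
  rw [Nat.card_congr hroots, Nat.card_eq_fintype_card, card_rootSet_eq_natDegree hsep,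
    FiniteField.X_pow_card_sub_X_natDegree_eq L hq2]

theorem exists_ne_zero_eval_eq_self (hq2 : 2 ≤ q) {G : L[X]} (hG : G ≠ 0)
    (hdvd : X ^ q ∣ G) (hder : derivative G = 0) : ∃ y ≠ 0, G.eval y = y := by
  classical
  have hdeg : 1 < G.natDegree := by
    have := natDegree_le_of_dvd hdvd hG
    rw [natDegree_X_pow] at this
    omega
  have hFdeg : (G - X).natDegree = G.natDegree :=
    natDegree_sub_eq_left_of_natDegree_lt (by rwa [natDegree_X])
  have hsep : (G - X).Separable := by
    rw [Separable, derivative_sub, hder, derivative_X, zero_sub]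
    exact isCoprime_one_right.neg_right
  have hG0 : G.eval 0 = 0 := by
    rw [← coeff_zero_eq_eval_zero, ← X_dvd_iff]
    exact (dvd_pow_self X (by omega)).trans hdvd
  have h0 : (0 : L) ∈ (G - X).rootSet L := by
    simp [mem_rootSet, hsep.ne_zero, hG0]
  obtain ⟨⟨y, hy⟩, hy0⟩ := Fintype.exists_ne_of_one_lt_card (α := (G - X).rootSet L)
    (by rwa [card_rootSet_eq_natDegree hsep, hFdeg]) ⟨0, h0⟩
  refine ⟨y, fun h => hy0 (Subtype.ext h), ?_⟩
  simpa [mem_rootSet, hsep.ne_zero, sub_eq_zero] using hy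

end IsSepClosed

section CyclicCoeffPoly

variable {L : Type*} [Field L] (q : ℕ) (c : ℕ → L)

/-- If `T` is `q`-semilinear and `T^{m+1} w = ∑_{i ≤ m} c i • T^i w`, then `∑_{i ≤ m} x i • T^i w`
is fixed by `T` as soon as `x i = (cyclicCoeffPoly q c i).eval (x m)` for all `i ≤ m`. -/
noncomputable def cyclicCoeffPoly : ℕ → L[X]
  | 0 => C (c 0) * X ^ q
  | i + 1 => cyclicCoeffPoly i ^ q + C (c (i + 1)) * X ^ q

variable {q c}

theorem derivative_cyclicCoeffPoly (hq : (q : L) = 0) (i : ℕ) :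
    derivative (cyclicCoeffPoly q c i) = 0 := by
  induction i with
  | zero => simp [cyclicCoeffPoly, derivative_X_pow, hq]
  | succ i ih => simp [cyclicCoeffPoly, derivative_pow, hq, ih]

theorem X_pow_dvd_cyclicCoeffPoly (hq : q ≠ 0) (i : ℕ) : X ^ q ∣ cyclicCoeffPoly q c i := by
  induction i with
  | zero => exact dvd_mul_left _ _
  | succ i ih =>
    exact dvd_add ((dvd_pow_self _ hq).trans (pow_dvd_pow_of_dvd ih q)) (dvd_mul_left _ _)

theorem cyclicCoeffPoly_eq_zero_iff (hq2 : 2 ≤ q) (i : ℕ) :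
    cyclicCoeffPoly q c i = 0 ↔ ∀ j ≤ i, c j = 0 := by
  induction i with
  | zero => simp [cyclicCoeffPoly]
  | succ i ih =>
    by_cases hQ : cyclicCoeffPoly q c i = 0
    · simp [cyclicCoeffPoly, hQ, zero_pow (by omega : q ≠ 0), Nat.le_succ_iff, or_imp, forall_and,
        ← ih]
    · have hdeg : (C (c (i + 1)) * X ^ q).natDegree < (cyclicCoeffPoly q c i ^ q).natDegree := by
        have hQdeg := natDegree_le_of_dvd (X_pow_dvd_cyclicCoeffPoly (c := c) (by omega) i) hQ
        rw [natDegree_X_pow] at hQdeg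
        calc (C (c (i + 1)) * X ^ q).natDegree ≤ q := natDegree_C_mul_X_pow_le _ _
          _ < q * q := by nlinarith
          _ ≤ _ := by rw [natDegree_pow]; exact Nat.mul_le_mul_left q hQdeg
      have hne : cyclicCoeffPoly q c (i + 1) ≠ 0 := by
        rw [cyclicCoeffPoly]
        exact ne_zero_of_natDegree_gt (natDegree_add_eq_left_of_natDegree_lt hdeg ▸ hdeg)
      simp only [hne, false_iff]
      exact fun h => hQ ((ih.mpr fun j hj => h j (hj.trans i.le_succ)))

end CyclicCoeffPoly

theorem LinearMap.injective_of_surjective_semilinear {K V : Type*} [Field K] [AddCommGroup V]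
    [Module K V] [FiniteDimensional K V] {σ : K →+* K} (T : V →ₛₗ[σ] V) (hT : Surjective T) :
    Injective T := by
  let b := Module.finBasis K V
  have hspan : ⊤ ≤ span K (Set.range (T ∘ b)) := by
    rintro v -
    obtain ⟨u, rfl⟩ := hT v
    rw [← b.sum_repr u, map_sum]
    exact sum_mem fun i _ => by
      rw [map_smulₛₗ]; exact smul_mem _ _ (subset_span ⟨i, rfl⟩)
  have hli := linearIndependent_of_top_le_span_of_card_eq_finrank hspan (by simp)
  refine (injective_iff_map_eq_zero T).mpr fun u hu => ?_
  have hTu : T u = ∑ i, σ (b.repr u i) • T (b i) := by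
    conv_lhs => rw [← b.sum_repr u]
    simp only [map_sum, map_smulₛₗ]
  have hcoord : ∀ i, σ (b.repr u i) = 0 :=
    Fintype.linearIndependent_iff.mp hli _ (hTu ▸ hu)
  rw [← b.sum_repr u]
  exact sum_eq_zero fun i _ => by rw [(map_eq_zero σ).mp (hcoord i), zero_smul]

theorem exists_mem_span_image_range_succ {R M : Type*} [Semiring R] [AddCommMonoid M] [Module R M]
    [IsNoetherian R M] (f : ℕ → M) (hf : f 0 ≠ 0) :
    ∃ m, f (m + 1) ∈ span R (f '' ↑(range (m + 1))) ∧ f m ∉ span R (f '' ↑(range m)) := by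
  classical
  let U : ℕ →o Submodule R M :=
    ⟨fun k => span R (f '' ↑(range k)), fun a b h => span_mono (Set.image_mono (by simpa using h))⟩
  obtain ⟨n, hn⟩ := monotone_stabilizes_iff_noetherian.mpr ‹_› U
  have hex : ∃ k, f k ∈ U k :=
    ⟨n, (hn (n + 1) n.le_succ).symm ▸ subset_span ⟨n, by simp, rfl⟩⟩
  obtain ⟨m, hm⟩ : ∃ m, Nat.find hex = m + 1 :=
    Nat.exists_eq_succ_of_ne_zero fun h => hf <| by
      have h0 := Nat.find_spec hex
      rw [h] at h0
      simpa [U] using h0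
  exact ⟨m, hm ▸ Nat.find_spec hex, Nat.find_min hex (by omega)⟩

theorem sum_range_succ_smul_ne_zero {K V : Type*} [Field K] [AddCommGroup V] [Module K V]
    {f : ℕ → V} {m : ℕ} (hf : f m ∉ span K (f '' ↑(range m))) {x : ℕ → K} (hx : x m ≠ 0) :
    ∑ i ∈ range (m + 1), x i • f i ≠ 0 := by
  rw [sum_range_succ]
  intro h
  refine hf ((smul_mem_iff _ hx).mp ?_)
  rw [eq_neg_of_add_eq_zero_right h]
  exact neg_mem (sum_mem fun i hi => smul_mem _ _ (subset_span ⟨i, hi, rfl⟩))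

section Basis

variable {K V ι : Type*} [Field K] [AddCommGroup V] [Module K V]

theorem exists_finBasis_mem_of_top_le_span [FiniteDimensional K V] {s : Set V}
    (hs : ⊤ ≤ span K s) : ∃ b : Module.Basis (Fin (Module.finrank K V)) K V, ∀ i, b i ∈ s :=
  let b := Module.Basis.ofSpan hs
  ⟨b.reindex (b.indexEquiv (Module.finBasis K V)), fun i => by
    rw [Module.Basis.reindex_apply]
    exact Module.Basis.ofSpan_subset hs ⟨_, rfl⟩⟩

variable [Fintype ι] {σ : K →+* K} {T : V →ₛₗ[σ] V} (b : Module.Basis ι K V)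

theorem Module.Basis.repr_apply_of_apply_eq_self (hb : ∀ i, T (b i) = b i) (v : V) (i : ι) :
    b.repr (T v) i = σ (b.repr v i) := by
  have hTv : T v = ∑ j, σ (b.repr v j) • b j := by
    conv_lhs => rw [← b.sum_repr v]
    simp only [map_sum, map_smulₛₗ, hb]
  rw [hTv, b.repr_sum_self]

noncomputable def Module.Basis.fixedPointsEquiv (hb : ∀ i, T (b i) = b i) :
    {v // T v = v} ≃ (ι → {a : K // σ a = a}) where
  toFun v i := ⟨b.repr v i, by rw [← b.repr_apply_of_apply_eq_self hb, v.2]⟩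
  invFun c := ⟨∑ i, (c i : K) • b i, by
    refine b.ext_elem fun i => ?_
    rw [b.repr_apply_of_apply_eq_self hb, b.repr_sum_self, (c i).2]⟩
  left_inv v := Subtype.ext (b.sum_repr v)
  right_inv c := funext fun i => Subtype.ext (congrFun (b.repr_sum_self fun j => (c j : K)) i)

end Basis

section Frobenius

variable {p e : ℕ} {L : Type*} [Field L] [CharP L p]

variable (L) in
theorem natCast_pow_eq_zero (he : 0 < e) : ((p ^ e : ℕ) : L) = 0 := by
  simp [he.ne']

variable [Fact p.Prime] {V : Type*} [AddCommGroup V] [Module L V]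

theorem two_le_pow (he : 0 < e) : 2 ≤ p ^ e :=
  Nat.one_lt_pow he.ne' (Fact.out : p.Prime).one_lt

theorem apply_sum_iterate_eq_self (T : V →ₛₗ[iterateFrobenius L p e] V) (w : V) {m : ℕ}
    {c x : ℕ → L} (hc : ∑ i ∈ range (m + 1), c i • T^[i] w = T^[m + 1] w)
    (hx0 : x 0 = c 0 * x m ^ p ^ e)
    (hxs : ∀ i < m, x (i + 1) = x i ^ p ^ e + c (i + 1) * x m ^ p ^ e) :
    T (∑ i ∈ range (m + 1), x i • T^[i] w) = ∑ i ∈ range (m + 1), x i • T^[i] w := by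
  have hT : T (∑ i ∈ range (m + 1), x i • T^[i] w) =
      ∑ i ∈ range m, x i ^ p ^ e • T^[i + 1] w + x m ^ p ^ e • T^[m + 1] w := by
    simp only [map_sum, map_smulₛₗ, iterateFrobenius_def, ← iterate_succ_apply' T]
    exact sum_range_succ _ m
  have hxs' : ∑ i ∈ range m, x (i + 1) • T^[i + 1] w =
      ∑ i ∈ range m, (x i ^ p ^ e + c (i + 1) * x m ^ p ^ e) • T^[i + 1] w :=
    sum_congr rfl fun i hi => by rw [hxs i (mem_range.mp hi)]
  rw [hT, ← hc, sum_range_succ' (fun i => c i • _), sum_range_succ' (fun i => x i • _), hx0, hxs']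
  simp only [add_smul, mul_smul, smul_add, smul_sum, sum_add_distrib, mul_comm (c _)]
  abel

theorem exists_ne_zero_apply_eq_self [IsSepClosed L] [FiniteDimensional L V] [Nontrivial V]
    (he : 0 < e) (T : V →ₛₗ[iterateFrobenius L p e] V) (hT : Injective T) :
    ∃ v ≠ 0, T v = v := by
  have hq := natCast_pow_eq_zero L he
  have hq2 := two_le_pow (p := p) he
  obtain ⟨w, hw⟩ := exists_ne (0 : V)
  have hf : ∀ i, T^[i] w ≠ 0 := fun i h => hw (hT.iterate i (h.trans (iterate_map_zero T i).symm))
  obtain ⟨m, hmem, hnot⟩ := exists_mem_span_image_range_succ (R := L) (fun i => T^[i] w) (hf 0)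
  obtain ⟨c, hc⟩ := (mem_span_image_finset_iff_exists_fun' L).mp hmem
  set Q := cyclicCoeffPoly (p ^ e) c
  have hQ : Q m ≠ 0 := by
    rw [Ne, cyclicCoeffPoly_eq_zero_iff hq2]
    refine fun h => hf (m + 1) (hc ▸ sum_eq_zero fun i hi => ?_)
    rw [h i (Nat.lt_succ_iff.mp (mem_range.mp hi)), zero_smul]
  obtain ⟨y, hy0, hy⟩ := IsSepClosed.exists_ne_zero_eval_eq_self hq2 hQ
    (X_pow_dvd_cyclicCoeffPoly (by omega) m) (derivative_cyclicCoeffPoly hq m)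
  refine ⟨_, sum_range_succ_smul_ne_zero hnot (x := fun i => (Q i).eval y) (by rwa [hy]),
    apply_sum_iterate_eq_self T w hc ?_ fun i _ => ?_⟩ <;>
  simp [Q, cyclicCoeffPoly, hy]

theorem exists_mem_span_sub_eq [IsSepClosed L] (he : 0 < e) (T : V →ₛₗ[iterateFrobenius L p e] V)
    {w : V} (hw : w ∈ span L {v | T v = v}) : ∃ x ∈ span L {v | T v = v}, T x - x = w := by
  have hq := natCast_pow_eq_zero L he
  have hq2 := two_le_pow (p := p) he
  rw [← mem_toAddSubmonoid, span_eq_closure] at hw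
  induction hw using AddSubmonoid.closure_induction with
  | mem _ h =>
    obtain ⟨a, -, g, hg : T g = g, rfl⟩ := h
    obtain ⟨y, hy⟩ := IsSepClosed.exists_pow_sub_self_eq hq hq2 a
    refine ⟨y • g, smul_mem _ _ (subset_span hg), ?_⟩
    rw [map_smulₛₗ, iterateFrobenius_def, hg, ← sub_smul, hy]
  | zero => exact ⟨0, zero_mem _, by simp⟩
  | add _ _ _ _ h₁ h₂ =>
    obtain ⟨x₁, hx₁, rfl⟩ := h₁
    obtain ⟨x₂, hx₂, rfl⟩ := h₂
    exact ⟨x₁ + x₂, add_mem hx₁ hx₂, by rw [map_add]; abel⟩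

theorem span_setOf_apply_eq_self_eq_top [IsSepClosed L] [FiniteDimensional L V] (he : 0 < e)
    (T : V →ₛₗ[iterateFrobenius L p e] V) (hT : Surjective T) : span L {v | T v = v} = ⊤ := by
  set W := span L {v | T v = v}
  by_contra hW
  have hle : W ≤ W.comap T := span_le.mpr fun v (hv : T v = v) => by
    simpa [hv] using subset_span (s := {v | T v = v}) hv
  let T' := W.mapQ W T hle
  have hT' : Surjective T' := by
    intro z
    obtain ⟨v, rfl⟩ := W.mkQ_surjective z
    obtain ⟨u, rfl⟩ := hT v
    exact ⟨W.mkQ u, rfl⟩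
  have : Nontrivial (V ⧸ W) := Quotient.nontrivial_iff.mpr hW
  obtain ⟨z, hz, hTz⟩ :=
    exists_ne_zero_apply_eq_self he T' (LinearMap.injective_of_surjective_semilinear T' hT')
  obtain ⟨u, rfl⟩ := W.mkQ_surjective z
  obtain ⟨x, hxW, hx⟩ := exists_mem_span_sub_eq he T ((Submodule.Quotient.eq W).mp hTz)
  have hfix : u - x ∈ W := subset_span (show T (u - x) = u - x by
    rw [map_sub, sub_eq_sub_iff_sub_eq_sub, hx])
  exact hz ((Quotient.mk_eq_zero W).mpr (by simpa using add_mem hfix hxW))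

end Frobenius

/-- Lang's theorem / Frobenius descent: over a separably closed field `L ⊇ 𝔽_q`, a
bijective `q`-Frobenius-semilinear endomorphism `τ` of a finite-dimensional
`L`-vector space `V` has `𝔽_q`-space of invariants of dimension `dim_L V`, spanned
by an `L`-basis of `V` consisting of fixed vectors; so `V^τ ⊗_{𝔽_q} L ≅ V`. -/
theorem stmt16 (p e : ℕ) [Fact p.Prime] (he : 0 < e)
    (L : Type*) [Field L] [CharP L p] [IsSepClosed L]
    (V : Type*) [AddCommGroup V] [Module L V] [FiniteDimensional L V]
    (τ : V → V) (hbij : Function.Bijective τ)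
    (hadd : ∀ v w : V, τ (v + w) = τ v + τ w)
    (hsem : ∀ (a : L) (v : V), τ (a • v) = a ^ p ^ e • τ v) :
    Nat.card {v : V // τ v = v} = (p ^ e) ^ Module.finrank L V ∧
    ∃ b : Module.Basis (Fin (Module.finrank L V)) L V,
      (∀ i, τ (b i) = b i) ∧
      ∀ v : V, τ v = v → ∃ c : Fin (Module.finrank L V) → L,
        (∀ i, c i ^ p ^ e = c i) ∧ v = ∑ i, c i • b i := by
  let T : V →ₛₗ[iterateFrobenius L p e] V :=
    { toFun := τ, map_add' := hadd, map_smul' := hsem }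
  obtain ⟨b, hb⟩ :=
    exists_finBasis_mem_of_top_le_span (span_setOf_apply_eq_self_eq_top he T hbij.2).ge
  refine ⟨?_, b, hb, fun v hv => ⟨b.repr v, fun i => ?_, (b.sum_repr v).symm⟩⟩
  · change Nat.card {v // T v = v} = _
    rw [Nat.card_congr (b.fixedPointsEquiv hb), Nat.card_fun, Nat.card_fin]
    simp only [iterateFrobenius_def]
    rw [IsSepClosed.natCard_pow_eq_self (natCast_pow_eq_zero L he) (two_le_pow he)]
  · have := b.repr_apply_of_apply_eq_self hb v i
    rw [show T v = v from hv, iterateFrobenius_def] at this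
    exact this.symm
end

section
/- Let L be a perfect field containing F_q and let f : M → M' be an injective homomorphism of finite free A_L-modules (A_L = F_q[t] ⊗_{F_q} L) with finite-dimensional cokernel K = coker f, equipped with the induced Frobenius-semilinear map τ_K : K → K. Then f factors as f = f_sep ∘ f_insep where f_insep : M → M'' has cokernel on which τ is nilpotent (purely inseparable part) and f_sep : M'' → M' has cokernel on which τ is bijective (separable part); such a factorization exists by splitting K into its étale and nilpotent parts. -/
/-!
The submodules `{y | τ'^[n] y ∈ f(M)}` increase with `n` and all contain `f(M)`; since `M' / f(M)`
is finite-dimensional they stabilise, and the stable value `N` satisfies `τ'⁻¹(N) = N`. Hence `τ'`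
is nilpotent on `N / f(M)` and injective on `M' / N`. The latter is a finite-dimensional
`L`-space on which `τ'` is semilinear for the Frobenius `a ↦ a ^ p ^ e`, which is bijective
because `L` is perfect, so `τ'` is also surjective there.
-/

namespace LinearMap

variable {K V : Type*} [Field K] [AddCommGroup V] [Module K V] [FiniteDimensional K V]
  {φ : K →+* K} [RingHomSurjective φ]

theorem surjective_of_injectiveₛₗ {T : V →ₛₗ[φ] V} (hT : Function.Injective T) :
    Function.Surjective T := by
  let b := Module.finBasis K V
  have hli : LinearIndependent K (T ∘ b) :=
    b.linearIndependent.map_of_surjective_injectiveₛ φ T.toAddMonoidHom φ.surjective hT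
      fun r m => T.map_smulₛₗ r m
  have hspan := hli.span_eq_top_of_card_eq_finrank' (by simp)
  rw [← range_eq_top, eq_top_iff, ← hspan, Submodule.span_le, Set.range_comp]
  exact Set.image_subset_range _ _

end LinearMap

namespace Submodule

section Field

variable {K V : Type*} [Field K] [AddCommGroup V] [Module K V]
  {φ : K →+* K} [RingHomSurjective φ]

theorem exists_sub_apply_mem_of_comap_eq_self {T : V →ₛₗ[φ] V} {W : Submodule K V}
    [FiniteDimensional K (V ⧸ W)] (hW : W.comap T = W) (y : V) : ∃ z, y - T z ∈ W := by
  have hTW : W ≤ W.comap T := hW.ge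
  have hinj : Function.Injective (W.mapQ W T hTW) := by
    rw [← LinearMap.ker_eq_bot, ker_mapQ, hW, mkQ_map_self]
  obtain ⟨z, hz⟩ := LinearMap.surjective_of_injectiveₛₗ hinj (W.mkQ y)
  obtain ⟨z, rfl⟩ := W.mkQ_surjective z
  refine ⟨z, (Quotient.eq W).mp ?_⟩
  simpa using hz.symm

end Field

variable {R M : Type*} [Ring R] [AddCommGroup M] [Module R M]

theorem monotone_stabilizes_of_le {P : Submodule R M} [IsNoetherian R (M ⧸ P)]
    {N : ℕ → Submodule R M} (hN : Monotone N) (hP : ∀ n, P ≤ N n) :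
    ∃ n₀, ∀ m ≥ n₀, N n₀ = N m := by
  obtain ⟨n₀, hn₀⟩ := monotone_stabilizes_iff_noetherian.mpr ‹_›
    ⟨fun n => (N n).map P.mkQ, fun _ _ h => map_mono (hN h)⟩
  refine ⟨n₀, fun m hm => ?_⟩
  have : comap P.mkQ (map P.mkQ (N n₀)) = comap P.mkQ (map P.mkQ (N m)) :=
    congrArg _ (hn₀ m hm)
  rwa [comap_map_mkQ, comap_map_mkQ, sup_eq_right.mpr (hP _),
    sup_eq_right.mpr (hP _)] at this

variable {σ : R →+* R} (T : M →ₛₗ[σ] M)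

theorem mem_iterate_comap {P : Submodule R M} {n : ℕ} {x : M} :
    x ∈ (comap T)^[n] P ↔ T^[n] x ∈ P := by
  induction n generalizing x with
  | zero => rfl
  | succ n ih => rw [Function.iterate_succ_apply', mem_comap, ih, Function.iterate_succ_apply]

theorem exists_comap_eq_self_of_le_comap {P : Submodule R M} [IsNoetherian R (M ⧸ P)]
    (hP : P ≤ P.comap T) :
    ∃ N : Submodule R M, P ≤ N ∧ N.comap T = N ∧ ∃ n : ℕ, ∀ x ∈ N, T^[n] x ∈ P := by
  have hmono : Monotone fun n => (comap T)^[n] P :=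
    Monotone.monotone_iterate_of_le_map (fun _ _ h => comap_mono h) hP
  obtain ⟨n₀, hn₀⟩ := monotone_stabilizes_of_le (P := P) hmono fun n => hmono n.zero_le
  refine ⟨_, hmono n₀.zero_le, ?_, n₀, fun x => (mem_iterate_comap T).mp⟩
  rw [← Function.iterate_succ_apply' (comap T)]
  exact (hn₀ _ n₀.le_succ).symm

end Submodule

theorem stmt19_general (p e : ℕ) [Fact p.Prime]
    (L : Type*) [Field L] [CharP L p] [PerfectRing L p]
    (σ : Polynomial L →+* Polynomial L)
    (hσC : ∀ a : L, σ (Polynomial.C a) = Polynomial.C (a ^ p ^ e))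
    {M M' : Type*} [AddCommGroup M] [Module (Polynomial L) M]
    [AddCommGroup M'] [Module (Polynomial L) M']
    [Module L M'] [IsScalarTower L (Polynomial L) M']
    (τ : M → M) (τ' : M' → M')
    (hτ'add : ∀ x y : M', τ' (x + y) = τ' x + τ' y)
    (hτ'sem : ∀ (r : Polynomial L) (x : M'), τ' (r • x) = σ r • τ' x)
    (f : M →ₗ[Polynomial L] M')
    (hcompat : ∀ x : M, f (τ x) = τ' (f x))
    [FiniteDimensional L (M' ⧸ LinearMap.range f)] :
    ∃ N : Submodule (Polynomial L) M',
      LinearMap.range f ≤ N ∧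
      (∀ x ∈ N, τ' x ∈ N) ∧
      (∃ n : ℕ, ∀ x ∈ N, τ'^[n] x ∈ LinearMap.range f) ∧
      (∀ y : M', τ' y ∈ N → y ∈ N) ∧
      (∀ y : M', ∃ z : M', y - τ' z ∈ N) := by
  let T : M' →ₛₗ[σ] M' := ⟨⟨τ', hτ'add⟩, hτ'sem⟩
  let TL : M' →ₛₗ[iterateFrobenius L p e] M' := ⟨⟨τ', hτ'add⟩, fun a x => by
    change τ' (a • x) = a ^ p ^ e • τ' x
    rw [← algebraMap_smul (Polynomial L) a, hτ'sem, Polynomial.algebraMap_eq,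
      hσC, ← Polynomial.algebraMap_eq, algebraMap_smul]⟩
  have : IsNoetherian (Polynomial L) (M' ⧸ LinearMap.range f) :=
    isNoetherian_of_tower L inferInstance
  obtain ⟨N, hfN, hN, n, hnil⟩ := Submodule.exists_comap_eq_self_of_le_comap T
    (P := LinearMap.range f) (by rintro _ ⟨x, rfl⟩; exact ⟨τ x, hcompat x⟩)
  have : FiniteDimensional L (M' ⧸ N) :=
    .of_surjective ((Submodule.factor hfN).restrictScalars L) (Submodule.factor_surjective hfN)
  have : FiniteDimensional L (M' ⧸ N.restrictScalars L) :=
    .equiv (Submodule.Quotient.restrictScalarsEquiv L N).symm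
  have : RingHomSurjective (iterateFrobenius L p e) := ⟨(iterateFrobeniusEquiv L p e).surjective⟩
  refine ⟨N, hfN, fun x hx => ?_, ⟨n, hnil⟩, fun y hy => ?_,
    Submodule.exists_sub_apply_mem_of_comap_eq_self (T := TL) (W := N.restrictScalars L) ?_⟩
  · rwa [← hN] at hx
  · rwa [← hN]
  · exact SetLike.ext fun x => SetLike.ext_iff.mp hN x

/-- Over a perfect field `L`, an injective map `f : M → M'` of finite free
`A_L = L[t]`-modules compatible with `σ`-semilinear Frobenius structures `τ`, `τ'`
and with finite-dimensional cokernel factors as a purely inseparable isogeny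
followed by a separable one: there is an intermediate `τ'`-stable submodule `N`
with `f(M) ⊆ N ⊆ M'` such that `τ'` is nilpotent on `N / f(M)` and bijective on
`M' / N`. -/
theorem stmt19 (p e : ℕ) [Fact p.Prime] (he : 0 < e)
    (L : Type*) [Field L] [CharP L p] [PerfectRing L p]
    (σ : Polynomial L →+* Polynomial L)
    (hσC : ∀ a : L, σ (Polynomial.C a) = Polynomial.C (a ^ p ^ e))
    (hσX : σ Polynomial.X = Polynomial.X)
    {M M' : Type*} [AddCommGroup M] [Module (Polynomial L) M]
    [Module.Free (Polynomial L) M] [Module.Finite (Polynomial L) M]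
    [AddCommGroup M'] [Module (Polynomial L) M']
    [Module.Free (Polynomial L) M'] [Module.Finite (Polynomial L) M']
    [Module L M'] [IsScalarTower L (Polynomial L) M']
    (τ : M → M) (τ' : M' → M')
    (hτadd : ∀ x y : M, τ (x + y) = τ x + τ y)
    (hτ'add : ∀ x y : M', τ' (x + y) = τ' x + τ' y)
    (hτsem : ∀ (r : Polynomial L) (x : M), τ (r • x) = σ r • τ x)
    (hτ'sem : ∀ (r : Polynomial L) (x : M'), τ' (r • x) = σ r • τ' x)
    (f : M →ₗ[Polynomial L] M') (hf : Function.Injective f)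
    (hcompat : ∀ x : M, f (τ x) = τ' (f x))
    [FiniteDimensional L (M' ⧸ LinearMap.range f)] :
    ∃ N : Submodule (Polynomial L) M',
      LinearMap.range f ≤ N ∧
      (∀ x ∈ N, τ' x ∈ N) ∧
      (∃ n : ℕ, ∀ x ∈ N, τ'^[n] x ∈ LinearMap.range f) ∧
      (∀ y : M', τ' y ∈ N → y ∈ N) ∧
      (∀ y : M', ∃ z : M', y - τ' z ∈ N) :=
  stmt19_general p e L σ hσC τ τ' hτ'add hτ'sem f hcompat
end
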